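/- Every MWSR flow satisfies the ratio constraint: if a feasible flow f minimizes ∑_{j∈A} e_j (r_j^f)² among all feasible flows, then whenever (i,j) ∈ E, f_{ij} > 0 and (i,ℓ) ∈ E, one has r_j^f ≥ r_ℓ^f. -/

import Mathlib

open Finset
open scoped Classical

variable {S A : Type*} [Fintype S] [Fintype A]

/-- A feasible flow: nonnegative on edges, zero off edges, outflow of each security
bounded by its value, inflow of each account bounded by its exposure. -/
def Feasible (E : Finset (S × A)) (v : S → ℝ) (e : A → ℝ) (f : S → A → ℝ) : Prop :=
  (∀ i j, (i, j) ∈ E → 0 ≤ f i j) ∧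
  (∀ i j, (i, j) ∉ E → f i j = 0) ∧
  (∀ i : S, ∑ j ∈ Finset.univ.filter (fun j => (i, j) ∈ E), f i j ≤ v i) ∧
  (∀ j : A, ∑ i ∈ Finset.univ.filter (fun i => (i, j) ∈ E), f i j ≤ e j)

/-- The value of a flow: total flow on all edges. -/
noncomputable def flowValue (E : Finset (S × A)) (f : S → A → ℝ) : ℝ :=
  ∑ p ∈ E, f p.1 p.2

/-- The risk ratio of account `j` under a flow `f`. -/
noncomputable def riskRatio (E : Finset (S × A)) (e : A → ℝ) (f : S → A → ℝ) (j : A) : ℝ :=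
  (e j - ∑ i ∈ Finset.univ.filter (fun i => (i, j) ∈ E), f i j) / e j

/-- A maximum flow: feasible, with value maximal among feasible flows. -/
def IsMaxFlow (E : Finset (S × A)) (v : S → ℝ) (e : A → ℝ) (f : S → A → ℝ) : Prop :=
  Feasible E v e f ∧ ∀ g : S → A → ℝ, Feasible E v e g → flowValue E g ≤ flowValue E f

/-- The ratio constraint: if `f` sends positive flow from `i` to `j` and `i` could
also be used for `l`, then the risk ratio of `j` is at least that of `l`. -/
def RatioConstraint (E : Finset (S × A)) (e : A → ℝ) (f : S → A → ℝ) : Prop :=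
  ∀ i j l, (i, j) ∈ E → 0 < f i j → (i, l) ∈ E →
    riskRatio E e f l ≤ riskRatio E e f j

/-- A ratio-balanced (maximum) flow. -/
def RatioBalanced (E : Finset (S × A)) (v : S → ℝ) (e : A → ℝ) (f : S → A → ℝ) : Prop :=
  IsMaxFlow E v e f ∧ RatioConstraint E e f

/-- The weighted sum of squared risk ratios `∑ j, e j * (r_j^f)^2`. -/
noncomputable def objective (E : Finset (S × A)) (e : A → ℝ) (f : S → A → ℝ) : ℝ :=
  ∑ j : A, e j * (riskRatio E e f j) ^ 2

/-- An MWSR flow: a feasible flow minimizing the weighted sum of squared risk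
ratios among all feasible flows. -/
def MWSR (E : Finset (S × A)) (v : S → ℝ) (e : A → ℝ) (f : S → A → ℝ) : Prop :=
  Feasible E v e f ∧ ∀ g : S → A → ℝ, Feasible E v e g → objective E e f ≤ objective E e g

/-!
If `r_j < r_ℓ` although `f` sends flow from `i` to `j` and `(i, ℓ)` is an edge, move a small
amount `ε` of that flow from `(i, j)` to `(i, ℓ)`. This stays feasible (account `ℓ` has slack,
since `r_ℓ > r_j ≥ 0`), changes only `r_j ↦ r_j + ε / e_j` and `r_ℓ ↦ r_ℓ - ε / e_ℓ`, and so
changes the objective by `2 ε (r_j - r_ℓ) + ε² (1 / e_j + 1 / e_ℓ) < 0` for small `ε`,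
contradicting minimality.
-/

section Shift

variable {α β : Type*} [DecidableEq α] [DecidableEq β]

def shiftFlow (f : α → β → ℝ) (i : α) (j l : β) (ε : ℝ) (a : α) (b : β) : ℝ :=
  f a b + if a = i then (if b = l then ε else 0) - (if b = j then ε else 0) else 0

variable {f : α → β → ℝ} {i a : α} {j l b : β} {ε : ℝ}

theorem shiftFlow_of_ne_left (h : a ≠ i) : shiftFlow f i j l ε a b = f a b := by
  simp [shiftFlow, h]

theorem shiftFlow_of_ne_right (hj : b ≠ j) (hl : b ≠ l) : shiftFlow f i j l ε a b = f a b := by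
  simp [shiftFlow, hj, hl]

theorem sum_shiftFlow_row {T : Finset β} (hj : j ∈ T) (hl : l ∈ T) :
    ∑ b ∈ T, shiftFlow f i j l ε i b = ∑ b ∈ T, f i b := by
  simp [shiftFlow, sum_add_distrib, sum_sub_distrib, hj, hl]

theorem sum_shiftFlow_col_source {T : Finset α} (hjl : j ≠ l) (hi : i ∈ T) :
    ∑ a ∈ T, shiftFlow f i j l ε a j = ∑ a ∈ T, f a j - ε := by
  simp [shiftFlow, sum_add_distrib, hjl, hi, sub_eq_add_neg]

theorem sum_shiftFlow_col_target {T : Finset α} (hjl : j ≠ l) (hi : i ∈ T) :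
    ∑ a ∈ T, shiftFlow f i j l ε a l = ∑ a ∈ T, f a l + ε := by
  simp [shiftFlow, sum_add_distrib, hjl.symm, hi]

end Shift

noncomputable def inflow (E : Finset (S × A)) (f : S → A → ℝ) (j : A) : ℝ :=
  ∑ i ∈ univ.filter (fun i => (i, j) ∈ E), f i j

section Inflow

omit [Fintype A]

variable {E : Finset (S × A)} {e : A → ℝ} {f : S → A → ℝ} {i : S} {j l : A} {ε : ℝ}

theorem riskRatio_eq_inflow (E : Finset (S × A)) (e : A → ℝ) (f : S → A → ℝ) (j : A) :
    riskRatio E e f j = (e j - inflow E f j) / e j :=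
  rfl

theorem inflow_lt_of_riskRatio_pos (hej : 0 < e j) (h : 0 < riskRatio E e f j) :
    inflow E f j < e j :=
  sub_pos.1 ((div_pos_iff_of_pos_right hej).1 h)

theorem inflow_shiftFlow_of_ne {b : A} (hj : b ≠ j) (hl : b ≠ l) :
    inflow E (shiftFlow f i j l ε) b = inflow E f b :=
  sum_congr rfl fun _ _ => shiftFlow_of_ne_right hj hl

theorem inflow_shiftFlow_source (hjl : j ≠ l) (hij : (i, j) ∈ E) :
    inflow E (shiftFlow f i j l ε) j = inflow E f j - ε :=
  sum_shiftFlow_col_source hjl (by simpa using hij)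

theorem inflow_shiftFlow_target (hjl : j ≠ l) (hil : (i, l) ∈ E) :
    inflow E (shiftFlow f i j l ε) l = inflow E f l + ε :=
  sum_shiftFlow_col_target hjl (by simpa using hil)

end Inflow

section Flow

variable {E : Finset (S × A)} {v : S → ℝ} {e : A → ℝ} {f : S → A → ℝ} {i : S} {j l : A}
  {ε : ℝ}

theorem Feasible.inflow_le (hf : Feasible E v e f) (j : A) : inflow E f j ≤ e j :=
  hf.2.2.2 j

theorem riskRatio_nonneg (hf : Feasible E v e f) (hej : 0 < e j) : 0 ≤ riskRatio E e f j :=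
  div_nonneg (sub_nonneg.2 (hf.inflow_le j)) hej.le

theorem feasible_shiftFlow (hf : Feasible E v e f) (hij : (i, j) ∈ E) (hil : (i, l) ∈ E)
    (hjl : j ≠ l) (hε : 0 ≤ ε) (hεf : ε ≤ f i j) (hεl : inflow E f l + ε ≤ e l) :
    Feasible E v e (shiftFlow f i j l ε) := by
  obtain ⟨hnonneg, hoff, hout, hin⟩ := hf
  refine ⟨fun a b hab => ?_, fun a b hab => ?_, fun a => ?_, fun b => ?_⟩
  · simp only [shiftFlow]
    split_ifs <;> subst_vars
    · exact absurd rfl hjl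
    all_goals linarith [hnonneg a b hab]
  · by_cases ha : a = i
    · subst ha
      rw [shiftFlow_of_ne_right (by rintro rfl; exact hab hij) (by rintro rfl; exact hab hil),
        hoff a b hab]
    · rw [shiftFlow_of_ne_left ha, hoff a b hab]
  · by_cases ha : a = i
    · subst ha
      rw [sum_shiftFlow_row (by simpa using hij) (by simpa using hil)]
      exact hout a
    · simpa only [shiftFlow_of_ne_left ha] using hout a
  · change inflow E _ b ≤ e b
    by_cases hbj : b = j
    · subst hbj
      rw [inflow_shiftFlow_source hjl hij]
      exact (sub_le_self _ hε).trans (hin b)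
    by_cases hbl : b = l
    · subst hbl
      rwa [inflow_shiftFlow_target hjl hil]
    · rw [inflow_shiftFlow_of_ne hbj hbl]
      exact hin b

theorem objective_shiftFlow (hij : (i, j) ∈ E) (hil : (i, l) ∈ E) (hjl : j ≠ l)
    (hej : e j ≠ 0) (hel : e l ≠ 0) :
    objective E e (shiftFlow f i j l ε) = objective E e f
      + 2 * ε * (riskRatio E e f j - riskRatio E e f l) + ε ^ 2 * (1 / e j + 1 / e l) := by
  have hdiff : objective E e (shiftFlow f i j l ε) - objective E e f
      = (e j * riskRatio E e (shiftFlow f i j l ε) j ^ 2 - e j * riskRatio E e f j ^ 2)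
        + (e l * riskRatio E e (shiftFlow f i j l ε) l ^ 2 - e l * riskRatio E e f l ^ 2) := by
    rw [objective, objective, ← sum_sub_distrib]
    refine Fintype.sum_eq_add j l hjl fun b ⟨hbj, hbl⟩ => ?_
    simp only [riskRatio_eq_inflow, inflow_shiftFlow_of_ne hbj hbl, sub_self]
  simp only [riskRatio_eq_inflow, inflow_shiftFlow_source hjl hij,
    inflow_shiftFlow_target hjl hil] at hdiff ⊢
  rw [eq_add_of_sub_eq hdiff]
  field_simp
  ring

end Flow

theorem exists_pos_le_and_mul_sq_lt {M d c : ℝ} (hM : 0 < M) (hd : 0 < d) (hc : 0 < c) :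
    ∃ ε, 0 < ε ∧ ε ≤ M ∧ c * ε ^ 2 < 2 * d * ε := by
  have hε : 0 < min M (d / c) := lt_min hM (div_pos hd hc)
  have hcε : c * min M (d / c) ≤ d := (le_div_iff₀' hc).1 (min_le_right _ _)
  exact ⟨_, hε, min_le_left _ _, by nlinarith⟩

theorem mwsr_ratioConstraint_general (E : Finset (S × A)) (v : S → ℝ) (e : A → ℝ)
    (he : ∀ j, 0 < e j)
    (f : S → A → ℝ) (hf : MWSR E v e f) :
    RatioConstraint E e f := by
  obtain ⟨hfeas, hmin⟩ := hf
  intro i j l hij hfij hil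
  by_contra! hlt
  have hjl : j ≠ l := by rintro rfl; exact hlt.false
  have hslack : 0 < e l - inflow E f l :=
    sub_pos.2 (inflow_lt_of_riskRatio_pos (he l) ((riskRatio_nonneg hfeas (he j)).trans_lt hlt))
  obtain ⟨ε, hε, hεM, hdescent⟩ := exists_pos_le_and_mul_sq_lt (lt_min hfij hslack)
    (sub_pos.2 hlt) (add_pos (one_div_pos.2 (he j)) (one_div_pos.2 (he l)))
  have hshift := hmin _ (feasible_shiftFlow hfeas hij hil hjl hε.le
    (hεM.trans (min_le_left _ _)) (by linarith [hεM.trans (min_le_right _ _)]))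
  rw [objective_shiftFlow hij hil hjl (he j).ne' (he l).ne'] at hshift
  linarith

/-- Every MWSR flow satisfies the ratio constraint. -/
theorem mwsr_ratioConstraint (E : Finset (S × A)) (v : S → ℝ) (e : A → ℝ)
    (hv : ∀ i, 0 ≤ v i) (he : ∀ j, 0 < e j)
    (f : S → A → ℝ) (hf : MWSR E v e f) :
    RatioConstraint E e f :=
  mwsr_ratioConstraint_general E v e he f hf
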